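/- With u 0 = B, w 0 = W, w (n+1) = u n ++ w n ++ w n and u (n+1) = u n ++ w n, the number of occurrences of B in w n equals f (2n−1) for n ≥ 1 (and 0 for n = 0), and the number of occurrences of B in u n equals f (2n−2) for n ≥ 1 (and 1 for n = 0), where f is the Fibonacci sequence with f 0 = f 1 = 1. -/

import Mathlib

inductive Letter : Type
  | B : Letter
  | W : Letter
deriving DecidableEq, Repr

def fib1 : ℕ → ℕ
  | 0 => 1
  | 1 => 1
  | n + 2 => fib1 (n + 1) + fib1 n

def sub1 : Letter → List Letter
  | Letter.B => [Letter.B, Letter.W]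
  | Letter.W => [Letter.B, Letter.W, Letter.W]

def subw (w : List Letter) : List Letter := w.flatMap sub1


def uwPair : ℕ → List Letter × List Letter
  | 0 => ([Letter.B], [Letter.W])
  | n + 1 =>
    let p := uwPair n
    (p.1 ++ p.2, p.1 ++ p.2 ++ p.2)

def uWord (n : ℕ) : List Letter := (uwPair n).1
def wWord (n : ℕ) : List Letter := (uwPair n).2

theorem uWord_succ (n : ℕ) : uWord (n + 1) = uWord n ++ wWord n := rfl

theorem wWord_succ (n : ℕ) : wWord (n + 1) = uWord (n + 1) ++ wWord n := rfl

theorem count_B_uWord_wWord_succ (n : ℕ) :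
    (uWord (n + 1)).count Letter.B = fib1 (2 * n) ∧
      (wWord (n + 1)).count Letter.B = fib1 (2 * n + 1) := by
  induction n with
  | zero => decide
  | succ n ih =>
    obtain ⟨hu, hw⟩ := ih
    have hu' : (uWord (n + 2)).count Letter.B = fib1 (2 * n + 2) := by
      rw [uWord_succ, List.count_append, hu, hw, fib1, add_comm]
    refine ⟨hu', ?_⟩
    rw [wWord_succ, List.count_append, hu', hw]
    rfl

theorem count_B_uw :
    ((wWord 0).count Letter.B = 0) ∧
    (∀ n : ℕ, 1 ≤ n → (wWord n).count Letter.B = fib1 (2 * n - 1)) ∧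
    ((uWord 0).count Letter.B = 1) ∧
    (∀ n : ℕ, 1 ≤ n → (uWord n).count Letter.B = fib1 (2 * n - 2)) := by
  refine ⟨rfl, fun n hn => ?_, rfl, fun n hn => ?_⟩ <;>
    obtain ⟨m, rfl⟩ := Nat.exists_eq_add_of_le' hn
  -- `2 * (m + 1) - 1` and `2 * (m + 1) - 2` reduce to `2 * m + 1` and `2 * m`
  exacts [(count_B_uWord_wWord_succ m).2, (count_B_uWord_wWord_succ m).1]
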